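/- Consider the discrete-time system e^{(t+1)} = g(e^{(t)}, x^{(t)}) on ℝⁿ with input sequence (x^{(t)}) in ℝⁿ, where g is continuous with g(0,0) = 0. Suppose there exists a continuous ISS-Lyapunov function for this system, i.e., a continuous V: ℝⁿ → ℝ≥0, class-K∞ functions α₁, α₂, α₃ and a class-K function γ₀ such that α₁(‖e‖) ≤ V(e) ≤ α₂(‖e‖) for all e ∈ ℝⁿ and V(g(e,x)) − V(e) ≤ −α₃(‖e‖) + γ₀(‖x‖) for all e, x ∈ ℝⁿ. Then the system is input-to-state stable: there exist a class-KL function β and a class-K function γ such that for every initial condition e^{(0)} = η ∈ ℝⁿ and every bounded input sequence (x^{(s)}), the solution satisfies ‖e^{(t)}‖ ≤ β(‖η‖, t) + γ(sup_{0 ≤ s < t} ‖x^{(s)}‖) for all t ∈ ℕ. -/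

import Mathlib

open Filter Topology

/-- A class-K function: a continuous function `α : ℝ≥0 → ℝ≥0` (modelled as a real function
on `[0,∞)`) that is strictly increasing and satisfies `α 0 = 0`. -/
def IsClassK (α : ℝ → ℝ) : Prop :=
  ContinuousOn α (Set.Ici 0) ∧ StrictMonoOn α (Set.Ici 0) ∧ α 0 = 0 ∧
    ∀ r, 0 ≤ r → 0 ≤ α r

/-- A class-K∞ function: a class-K function with `α r → ∞` as `r → ∞`. -/
def IsClassKInf (α : ℝ → ℝ) : Prop :=
  IsClassK α ∧ Tendsto α atTop atTop

/-- A class-KL function: a continuous function `β : ℝ≥0 × ℝ≥0 → ℝ≥0` such that for each fixed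
`t`, `r ↦ β r t` is class-K, and for each fixed `r`, `t ↦ β r t` is decreasing and tends
to `0` as `t → ∞`. -/
def IsClassKL (β : ℝ → ℝ → ℝ) : Prop :=
  ContinuousOn (Function.uncurry β) (Set.Ici 0 ×ˢ Set.Ici 0) ∧
  (∀ t, 0 ≤ t → IsClassK fun r => β r t) ∧
  (∀ r, 0 ≤ r → AntitoneOn (fun t => β r t) (Set.Ici 0)) ∧
  (∀ r, 0 ≤ r → Tendsto (fun t => β r t) atTop (𝓝 0))

/-!
With `ρ = α₃ ∘ α₂⁻¹`, the Lyapunov inequality gives `V(e_{k+1}) ≤ V(e_k) - ρ(V(e_k)) + c`, where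
`c = γ₀(sup_{s ≤ k} ‖x_s‖)`. If `ρ(V(e_k)) ≥ 2c` the right side is at most `ψ(V(e_k))` for a
continuous strictly increasing `ψ` with `ψ v < v` for `v > 0`; otherwise `V(e_k) < α₂(α₃⁻¹(2c))`
and one step adds at most `c`. Hence `V(e_k) ≤ max (ψ^[k] (α₂ ‖η‖)) (α₂(α₃⁻¹(2c)) + c)`. The
iterates of `ψ` decrease to `0`; applying `α₁⁻¹` and interpolating linearly in `k` gives `β`,
and the second term gives `γ`.
-/

open Set

namespace IsClassK

variable {α β : ℝ → ℝ}

theorem monotoneOn (h : IsClassK α) : MonotoneOn α (Ici 0) := h.2.1.monotoneOn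

theorem of_strictMono (hc : Continuous α) (hm : StrictMono α) (h0 : α 0 = 0) : IsClassK α :=
  ⟨hc.continuousOn, hm.strictMonoOn _, h0, fun r hr => by simpa [h0] using hm.monotone hr⟩

theorem comp {σ : ℝ → ℝ} (hσc : Continuous σ) (hσm : StrictMono σ) (hσ0 : σ 0 = 0)
    (h : IsClassK α) : IsClassK fun r => σ (α r) :=
  ⟨hσc.comp_continuousOn h.1, hσm.comp_strictMonoOn h.2.1, by simp [h.2.2.1, hσ0],
    fun r hr => by simpa [hσ0] using hσm.monotone (h.2.2.2 r hr)⟩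

theorem add (hα : IsClassK α) (hβ : IsClassK β) : IsClassK fun r => α r + β r :=
  ⟨hα.1.add hβ.1, fun _ hr _ hs hrs => add_lt_add (hα.2.1 hr hs hrs) (hβ.2.1 hr hs hrs),
    by simp [hα.2.2.1, hβ.2.2.1], fun r hr => add_nonneg (hα.2.2.2 r hr) (hβ.2.2.2 r hr)⟩

theorem continuous_extend (h : IsClassK α) : Continuous fun r => α (max r 0) + min r 0 :=
  (h.1.comp_continuous (continuous_id.max continuous_const) fun r => le_max_right r 0).add
    (continuous_id.min continuous_const)

theorem strictMono_extend (h : IsClassK α) : StrictMono fun r => α (max r 0) + min r 0 := by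
  intro r s hrs
  rcases lt_or_ge r 0 with hr | hr
  · have hmax : α (max r 0) ≤ α (max s 0) :=
      h.monotoneOn (le_max_right r 0) (le_max_right s 0) (max_le_max hrs.le le_rfl)
    have hmin : min r 0 < min s 0 := by rw [min_eq_left hr.le]; exact lt_min hrs hr
    exact add_lt_add_of_le_of_lt hmax hmin
  · have hs := hr.trans hrs.le
    simpa [hr, hs] using h.2.1 hr hs hrs

end IsClassK

namespace IsClassKInf

variable {α : ℝ → ℝ}

theorem surjective_extend (h : IsClassKInf α) :
    Function.Surjective fun r => α (max r 0) + min r 0 :=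
  h.1.continuous_extend.surjective
    (h.2.congr' (by filter_upwards [eventually_ge_atTop 0] with r hr; simp [hr]))
    (tendsto_id.congr' (by filter_upwards [eventually_le_atBot 0] with r hr; simp [hr, h.1.2.2.1]))

/-- Extended by the identity on `(-∞, 0]`, a class-K∞ function becomes an order automorphism of
`ℝ`; its `symm` serves as `α⁻¹`. -/
noncomputable def orderIso (h : IsClassKInf α) : ℝ ≃o ℝ :=
  StrictMono.orderIsoOfSurjective _ h.1.strictMono_extend h.surjective_extend

theorem orderIso_apply (h : IsClassKInf α) {r : ℝ} (hr : 0 ≤ r) : h.orderIso r = α r := by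
  simp [orderIso, hr]

theorem orderIso_zero (h : IsClassKInf α) : h.orderIso 0 = 0 :=
  (h.orderIso_apply le_rfl).trans h.1.2.2.1

end IsClassKInf

theorem OrderIso.symm_apply_zero {e : ℝ ≃o ℝ} (h : e 0 = 0) : e.symm 0 = 0 :=
  e.symm_apply_eq.2 h.symm

theorem OrderIso.apply_nonneg {e : ℝ ≃o ℝ} (h : e 0 = 0) {r : ℝ} (hr : 0 ≤ r) : 0 ≤ e r := by
  simpa [h] using e.monotone hr

/-- The clamp `max v 0` keeps the index set nonempty, away from the junk value `sInf ∅ = 0`. -/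
noncomputable def lipschitzMinorant (m : ℝ → ℝ) (v : ℝ) : ℝ :=
  sInf ((fun w => m w + (v - w)) '' Icc 0 (max v 0))

section lipschitzMinorant

variable {m : ℝ → ℝ} {v v' w : ℝ}

theorem le_lipschitzMinorant {c : ℝ} (h : ∀ w ∈ Icc 0 (max v 0), c ≤ m w + (v - w)) :
    c ≤ lipschitzMinorant m v :=
  le_csInf ((nonempty_Icc.2 (le_max_right v 0)).image _) (forall_mem_image.2 h)

theorem lipschitzMinorant_le (hm : Monotone m) (hm0 : m 0 = 0) (hw : w ∈ Icc 0 (max v 0)) :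
    lipschitzMinorant m v ≤ m w + (v - w) := by
  refine csInf_le ⟨v - max v 0, forall_mem_image.2 fun w' hw' => ?_⟩ (mem_image_of_mem _ hw)
  have : 0 ≤ m w' := hm0 ▸ hm hw'.1
  linarith [hw'.2]

theorem lipschitzMinorant_le_apply (hm : Monotone m) (hm0 : m 0 = 0) (hv : 0 ≤ v) :
    lipschitzMinorant m v ≤ m v := by
  simpa using lipschitzMinorant_le hm hm0 ⟨hv, le_max_left v 0⟩

theorem lipschitzMinorant_le_self (hm : Monotone m) (hm0 : m 0 = 0) (v : ℝ) :
    lipschitzMinorant m v ≤ v := by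
  simpa [hm0] using lipschitzMinorant_le hm hm0 (w := 0) ⟨le_rfl, le_max_right v 0⟩

theorem lipschitzMinorant_nonneg (hm : Monotone m) (hm0 : m 0 = 0) (hv : 0 ≤ v) :
    0 ≤ lipschitzMinorant m v :=
  le_lipschitzMinorant fun w hw => by
    have : 0 ≤ m w := hm0 ▸ hm hw.1
    linarith [max_eq_left hv ▸ hw.2]

theorem lipschitzMinorant_pos (hm : StrictMono m) (hm0 : m 0 = 0) (hv : 0 < v) :
    0 < lipschitzMinorant m v := by
  have hpos : 0 < min (v / 2) (m (v / 2)) := lt_min (half_pos hv) (hm0 ▸ hm (half_pos hv))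
  refine hpos.trans_le (le_lipschitzMinorant fun w hw => ?_)
  rw [max_eq_left hv.le] at hw
  rcases le_total w (v / 2) with h | h
  · have : 0 ≤ m w := hm0 ▸ hm.monotone hw.1
    linarith [min_le_left (v / 2) (m (v / 2))]
  · have := hm.monotone h
    linarith [min_le_right (v / 2) (m (v / 2)), hw.2]

theorem lipschitzMinorant_mono (hm : Monotone m) (hm0 : m 0 = 0) :
    Monotone (lipschitzMinorant m) := by
  intro v v' hvv'
  refine le_lipschitzMinorant fun w hw => ?_
  rcases le_or_gt w (max v 0) with h | h
  · linarith [lipschitzMinorant_le hm hm0 ⟨hw.1, h⟩]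
  · have hwv' : w ≤ v' := (le_max_iff.1 hw.2).resolve_right ((le_max_right v 0).trans_lt h).not_ge
    linarith [lipschitzMinorant_le hm hm0 (v := v) ⟨le_max_right v 0, le_rfl⟩, hm h.le,
      le_max_left v 0]

theorem lipschitzMinorant_le_add (hm : Monotone m) (hm0 : m 0 = 0) (h : v ≤ v') :
    lipschitzMinorant m v' ≤ lipschitzMinorant m v + (v' - v) := by
  have : lipschitzMinorant m v' - (v' - v) ≤ lipschitzMinorant m v :=
    le_lipschitzMinorant fun w hw => by
      linarith [lipschitzMinorant_le hm hm0 (v := v') ⟨hw.1, hw.2.trans (max_le_max h le_rfl)⟩]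
  linarith

theorem lipschitzWith_lipschitzMinorant (hm : Monotone m) (hm0 : m 0 = 0) :
    LipschitzWith 1 (lipschitzMinorant m) :=
  LipschitzWith.of_le_add fun v v' => by
    rcases le_total v v' with h | h
    · linarith [lipschitzMinorant_mono hm hm0 h, dist_nonneg (x := v) (y := v')]
    · linarith [lipschitzMinorant_le_add hm hm0 h, Real.dist_eq v v', le_abs_self (v - v')]

end lipschitzMinorant

/-- Subtracting half of a 1-Lipschitz minorant of `ρ` (rather than of `ρ` itself) keeps the map
strictly increasing while preserving `v - ρ v / 2 ≤ decayMap ρ v`. -/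
noncomputable def decayMap (ρ : ℝ → ℝ) (v : ℝ) : ℝ := v - lipschitzMinorant ρ v / 2

section decayMap

variable {ρ : ℝ → ℝ} {v : ℝ}

theorem continuous_decayMap (hρ : Monotone ρ) (hρ0 : ρ 0 = 0) : Continuous (decayMap ρ) :=
  continuous_id.sub ((lipschitzWith_lipschitzMinorant hρ hρ0).continuous.div_const 2)

theorem strictMono_decayMap (hρ : Monotone ρ) (hρ0 : ρ 0 = 0) : StrictMono (decayMap ρ) :=
  fun v v' h => by
    have := lipschitzMinorant_le_add hρ hρ0 h.le
    unfold decayMap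
    linarith

theorem decayMap_le_self (hρ : Monotone ρ) (hρ0 : ρ 0 = 0) (hv : 0 ≤ v) : decayMap ρ v ≤ v := by
  have := lipschitzMinorant_nonneg hρ hρ0 hv
  unfold decayMap
  linarith

theorem decayMap_lt_self (hρ : StrictMono ρ) (hρ0 : ρ 0 = 0) (hv : 0 < v) : decayMap ρ v < v := by
  have := lipschitzMinorant_pos hρ hρ0 hv
  unfold decayMap
  linarith

theorem mapsTo_decayMap (hρ : Monotone ρ) (hρ0 : ρ 0 = 0) : MapsTo (decayMap ρ) (Ici 0) (Ici 0) :=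
  fun v hv => by
    have := lipschitzMinorant_le_self hρ hρ0 v
    simp only [mem_Ici, decayMap] at hv ⊢
    linarith

theorem decayMap_zero (hρ : Monotone ρ) (hρ0 : ρ 0 = 0) : decayMap ρ 0 = 0 :=
  le_antisymm (decayMap_le_self hρ hρ0 le_rfl) (mapsTo_decayMap hρ hρ0 self_mem_Ici)

theorem sub_half_le_decayMap (hρ : Monotone ρ) (hρ0 : ρ 0 = 0) (hv : 0 ≤ v) :
    v - ρ v / 2 ≤ decayMap ρ v := by
  have := lipschitzMinorant_le_apply hρ hρ0 hv
  unfold decayMap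
  linarith

end decayMap

section Iterate

variable {f : ℝ → ℝ} {v : ℝ}

theorem antitone_iterate_of_le_self (hf : MapsTo f (Ici 0) (Ici 0)) (hle : ∀ v, 0 ≤ v → f v ≤ v)
    (hv : 0 ≤ v) : Antitone fun k => f^[k] v :=
  antitone_nat_of_succ_le fun k => by
    rw [Function.iterate_succ_apply']
    exact hle _ (hf.iterate k hv)

theorem tendsto_iterate_nhds_zero (hc : Continuous f) (hf : MapsTo f (Ici 0) (Ici 0))
    (hf0 : f 0 = 0) (hlt : ∀ v, 0 < v → f v < v) (hv : 0 ≤ v) :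
    Tendsto (fun k => f^[k] v) atTop (𝓝 0) := by
  have hle : ∀ v, 0 ≤ v → f v ≤ v := fun v hv => by
    rcases hv.eq_or_lt with rfl | h
    exacts [hf0.le, (hlt v h).le]
  have hlim := tendsto_atTop_ciInf (antitone_iterate_of_le_self hf hle hv)
    ⟨0, forall_mem_range.2 fun k => hf.iterate k hv⟩
  have hL : 0 ≤ ⨅ k, f^[k] v := le_ciInf fun k => hf.iterate k hv
  rcases hL.eq_or_lt with hL | hL
  · rwa [← hL] at hlim
  · exact absurd (isFixedPt_of_tendsto_iterate hlim hc.continuousAt) (hlt _ hL).ne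

end Iterate

noncomputable def linearInterp (a : ℕ → ℝ) (t : ℝ) : ℝ :=
  (1 - (t - ⌊t⌋₊)) * a ⌊t⌋₊ + (t - ⌊t⌋₊) * a (⌊t⌋₊ + 1)

section linearInterp

variable {a b : ℕ → ℝ} {t t' : ℝ}

theorem linearInterp_natCast (a : ℕ → ℝ) (n : ℕ) : linearInterp a n = a n := by
  simp [linearInterp]

theorem linearInterp_eq_of_mem_Icc {n : ℕ} (ht : t ∈ Icc (n : ℝ) (n + 1)) :
    linearInterp a t = (1 - (t - n)) * a n + (t - n) * a (n + 1) := by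
  rcases ht.2.eq_or_lt with rfl | h
  · rw [show (n : ℝ) + 1 = (n + 1 : ℕ) by push_cast; rfl, linearInterp_natCast]
    push_cast
    ring
  · rw [linearInterp, (Nat.floor_eq_iff (n.cast_nonneg.trans ht.1)).2 ⟨ht.1, h⟩]

theorem sub_floor_mem_Ico (ht : 0 ≤ t) : t - ⌊t⌋₊ ∈ Ico (0 : ℝ) 1 :=
  ⟨sub_nonneg.2 (Nat.floor_le ht), by linarith [Nat.lt_floor_add_one t]⟩

theorem linearInterp_nonneg (ha : ∀ k, 0 ≤ a k) (ht : 0 ≤ t) : 0 ≤ linearInterp a t := by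
  obtain ⟨h0, h1⟩ := sub_floor_mem_Ico ht
  exact add_nonneg (mul_nonneg (by linarith) (ha _)) (mul_nonneg h0 (ha _))

theorem linearInterp_lt_linearInterp (hab : ∀ k, a k < b k) (ht : 0 ≤ t) :
    linearInterp a t < linearInterp b t := by
  obtain ⟨h0, h1⟩ := sub_floor_mem_Ico ht
  exact add_lt_add_of_lt_of_le (mul_lt_mul_of_pos_left (hab _) (by linarith))
    (mul_le_mul_of_nonneg_left (hab _).le h0)

theorem apply_floor_succ_le_linearInterp (ha : Antitone a) (ht : 0 ≤ t) :
    a (⌊t⌋₊ + 1) ≤ linearInterp a t := by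
  obtain ⟨h0, h1⟩ := sub_floor_mem_Ico ht
  have := mul_le_mul_of_nonneg_left (ha (⌊t⌋₊.le_succ)) (by linarith : (0 : ℝ) ≤ 1 - (t - ⌊t⌋₊))
  unfold linearInterp
  linarith

theorem linearInterp_le_apply_floor (ha : Antitone a) (ht : 0 ≤ t) :
    linearInterp a t ≤ a ⌊t⌋₊ := by
  obtain ⟨h0, h1⟩ := sub_floor_mem_Ico ht
  have := mul_le_mul_of_nonneg_left (ha (⌊t⌋₊.le_succ)) h0
  unfold linearInterp
  linarith

theorem linearInterp_antitoneOn (ha : Antitone a) : AntitoneOn (linearInterp a) (Ici 0) := by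
  intro t ht t' ht' htt'
  rcases (Nat.floor_mono htt').eq_or_lt with hfloor | hfloor
  · have := ha (⌊t⌋₊.le_succ)
    unfold linearInterp
    rw [← hfloor]
    nlinarith
  · calc linearInterp a t' ≤ a ⌊t'⌋₊ := linearInterp_le_apply_floor ha ht'
      _ ≤ a (⌊t⌋₊ + 1) := ha hfloor
      _ ≤ linearInterp a t := apply_floor_succ_le_linearInterp ha ht

theorem tendsto_linearInterp (ha : Antitone a) {l : ℝ} (hl : Tendsto a atTop (𝓝 l)) :
    Tendsto (linearInterp a) atTop (𝓝 l) := by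
  have hfloor : Tendsto (fun t : ℝ => ⌊t⌋₊) atTop atTop := tendsto_nat_floor_atTop
  refine tendsto_of_tendsto_of_tendsto_of_le_of_le'
    (hl.comp ((tendsto_add_atTop_nat 1).comp hfloor)) (hl.comp hfloor) ?_ ?_
  · filter_upwards [eventually_ge_atTop 0] with t ht
    exact apply_floor_succ_le_linearInterp ha ht
  · filter_upwards [eventually_ge_atTop 0] with t ht
    exact linearInterp_le_apply_floor ha ht

theorem continuousOn_linearInterp {a : ℕ → ℝ → ℝ} {s : Set ℝ} (hs : IsClosed s)
    (ha : ∀ k, ContinuousOn (a k) s) :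
    ContinuousOn (fun p : ℝ × ℝ => linearInterp (fun k => a k p.1) p.2) (s ×ˢ Ici 0) := by
  have hcover : s ×ˢ Ici 0 ⊆ ⋃ n : ℕ, s ×ˢ Icc (n : ℝ) (n + 1) := fun p ⟨hp1, hp2⟩ =>
    mem_iUnion.2 ⟨⌊p.2⌋₊, hp1, Nat.floor_le hp2, (Nat.lt_floor_add_one p.2).le⟩
  have hfin : LocallyFinite fun n : ℕ => s ×ˢ Icc (n : ℝ) (n + 1) := by
    have hZ : LocallyFinite fun n : ℤ => Icc (n : ℝ) (n + 1) :=
      locallyFinite_Icc_of_tendsto tendsto_intCast_atTop_atTop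
        (tendsto_atBot_add_const_right _ 1 (tendsto_intCast_atBot_iff.2 tendsto_id))
    refine ((hZ.comp_injective Nat.cast_injective).preimage_continuous continuous_snd).subset
      fun n p hp => ?_
    simpa using hp.2
  refine (hfin.continuousOn_iUnion (fun n => hs.prod isClosed_Icc) fun n => ?_).mono hcover
  have hpiece : ContinuousOn (fun p : ℝ × ℝ =>
      (1 - (p.2 - n)) * a n p.1 + (p.2 - n) * a (n + 1) p.1) (s ×ˢ Icc (n : ℝ) (n + 1)) := by
    have := ha n
    have := ha (n + 1)
    fun_prop (disch := exact mapsTo_fst_prod)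
  exact hpiece.congr fun p hp => linearInterp_eq_of_mem_Icc hp.2

end linearInterp

theorem isClassKL_linearInterp {a : ℕ → ℝ → ℝ} (hK : ∀ k, IsClassK (a k))
    (hanti : ∀ r, 0 ≤ r → Antitone fun k => a k r)
    (hlim : ∀ r, 0 ≤ r → Tendsto (fun k => a k r) atTop (𝓝 0)) :
    IsClassKL fun r t => linearInterp (fun k => a k r) t := by
  have hcont := continuousOn_linearInterp isClosed_Ici fun k => (hK k).1
  refine ⟨hcont, fun t ht => ⟨?_, ?_, ?_, ?_⟩, fun r hr => linearInterp_antitoneOn (hanti r hr),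
    fun r hr => tendsto_linearInterp (hanti r hr) (hlim r hr)⟩
  · exact hcont.comp (continuousOn_id.prodMk continuousOn_const) fun r hr => ⟨hr, ht⟩
  · exact fun r hr s hs hrs => linearInterp_lt_linearInterp (fun k => (hK k).2.1 hr hs hrs) ht
  · simp [linearInterp, fun k => (hK k).2.2.1]
  · exact fun r hr => linearInterp_nonneg (fun k => (hK k).2.2.2 r hr) ht

theorem isClassKL_decayMap_iterate {ρ σ τ : ℝ ≃o ℝ} (hρ : ρ 0 = 0) (hσ : σ 0 = 0) (hτ : τ 0 = 0) :
    IsClassKL fun r t => linearInterp (fun k => σ ((decayMap ρ)^[k] (τ r))) t := by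
  have hmaps := mapsTo_decayMap ρ.monotone hρ
  refine isClassKL_linearInterp (fun k => IsClassK.of_strictMono ?_ ?_ ?_) (fun r hr => ?_)
    (fun r hr => ?_)
  · exact σ.continuous.comp (((continuous_decayMap ρ.monotone hρ).iterate k).comp τ.continuous)
  · exact σ.strictMono.comp (((strictMono_decayMap ρ.monotone hρ).iterate k).comp τ.strictMono)
  · simp [hτ, Function.iterate_fixed (decayMap_zero ρ.monotone hρ), hσ]
  · exact σ.monotone.comp_antitone (antitone_iterate_of_le_self hmaps
      (fun v => decayMap_le_self ρ.monotone hρ) (OrderIso.apply_nonneg hτ hr))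
  · simpa [hσ, Function.comp_def] using (σ.continuous.tendsto 0).comp (tendsto_iterate_nhds_zero
      (continuous_decayMap ρ.monotone hρ) hmaps (decayMap_zero ρ.monotone hρ)
      (fun v => decayMap_lt_self ρ.strictMono hρ) (OrderIso.apply_nonneg hτ hr))

theorem le_max_iterate_of_le_max {α : Type*} [LinearOrder α] {f : α → α} (hf : Monotone f)
    {w B : ℕ → α} (hB : ∀ k, f (B k) ≤ B (k + 1))
    (hw : ∀ k, w (k + 1) ≤ max (f (w k)) (B (k + 1))) : ∀ k, w k ≤ max (f^[k] (w 0)) (B k)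
  | 0 => le_max_left _ _
  | k + 1 =>
    calc w (k + 1) ≤ max (f (w k)) (B (k + 1)) := hw k
      _ ≤ max (f (max (f^[k] (w 0)) (B k))) (B (k + 1)) :=
        max_le_max_right _ (hf (le_max_iterate_of_le_max hf hB hw k))
      _ = max (f^[k + 1] (w 0)) (max (f (B k)) (B (k + 1))) := by
        rw [hf.map_max, Function.iterate_succ_apply', max_assoc]
      _ = max (f^[k + 1] (w 0)) (B (k + 1)) := by rw [max_eq_right (hB k)]

theorem le_max_decayMap_of_le {ρ : ℝ ≃o ℝ} (hρ0 : ρ 0 = 0) {w w' c : ℝ} (hw : 0 ≤ w)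
    (h : w' ≤ w - ρ w + c) : w' ≤ max (decayMap ρ w) (ρ.symm (2 * c) + c) := by
  by_cases hc : 2 * c ≤ ρ w
  · exact le_max_of_le_left (by linarith [sub_half_le_decayMap ρ.monotone hρ0 hw])
  · have h1 : w < ρ.symm (2 * c) := ρ.lt_symm_apply.2 (not_le.1 hc)
    have h2 : 0 ≤ ρ w := OrderIso.apply_nonneg hρ0 hw
    exact le_max_of_le_right (by linarith)

theorem le_max_decayMap_iterate {ρ : ℝ ≃o ℝ} (hρ0 : ρ 0 = 0) {w c : ℕ → ℝ} (hw : ∀ k, 0 ≤ w k)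
    (hc : Monotone c) (hc0 : ∀ k, 0 ≤ c k) (hstep : ∀ k, w (k + 1) ≤ w k - ρ (w k) + c (k + 1))
    (k : ℕ) : w k ≤ max ((decayMap ρ)^[k] (w 0)) (ρ.symm (2 * c k) + c k) := by
  refine le_max_iterate_of_le_max (w := w) (B := fun k => ρ.symm (2 * c k) + c k)
    (strictMono_decayMap ρ.monotone hρ0).monotone (fun k => ?_)
    (fun k => le_max_decayMap_of_le hρ0 (hw k) (hstep k)) k
  have hB : 0 ≤ ρ.symm (2 * c k) + c k :=
    add_nonneg (OrderIso.apply_nonneg (OrderIso.symm_apply_zero hρ0) (by linarith [hc0 k]))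
      (hc0 k)
  have hck := hc k.le_succ
  calc decayMap ρ (ρ.symm (2 * c k) + c k) ≤ ρ.symm (2 * c k) + c k :=
        decayMap_le_self ρ.monotone hρ0 hB
    _ ≤ ρ.symm (2 * c (k + 1)) + c (k + 1) := add_le_add (ρ.symm.monotone (by linarith)) hck

theorem le_iSup_fin_succ (f : ℕ → ℝ) (k : ℕ) : f k ≤ ⨆ s : Fin (k + 1), f s :=
  le_ciSup (f := fun s : Fin (k + 1) => f s) (Finite.bddAbove_range _) (Fin.last k)

theorem monotone_iSup_fin {f : ℕ → ℝ} (hf : ∀ k, 0 ≤ f k) : Monotone fun k => ⨆ s : Fin k, f s :=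
  monotone_nat_of_le_succ fun _ => Real.iSup_le
    (fun s => le_ciSup (f := fun s : Fin (_ + 1) => f s) (Finite.bddAbove_range _) s.castSucc)
    (Real.iSup_nonneg fun s => hf s)

theorem lyapunov_step_le {E : Type*} [NormedAddCommGroup E] {g : E → E → E} {V : E → ℝ} {α₂ α₃ γ₀ : ℝ → ℝ}
    (hα₂ : IsClassKInf α₂) (hα₃ : IsClassKInf α₃) (hγ₀ : IsClassK γ₀)
    (hbound : ∀ e, V e ≤ α₂ ‖e‖) (hdecr : ∀ e x, V (g e x) - V e ≤ -α₃ ‖e‖ + γ₀ ‖x‖)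
    {e x : E} {c : ℝ} (hc0 : 0 ≤ c) (hc : ‖x‖ ≤ c) :
    V (g e x) ≤ V e - hα₂.orderIso.symm.trans hα₃.orderIso (V e) + γ₀ c := by
  have hρV : hα₃.orderIso (hα₂.orderIso.symm (V e)) ≤ α₃ ‖e‖ := by
    rw [← hα₃.orderIso_apply (norm_nonneg e)]
    refine hα₃.orderIso.monotone (hα₂.orderIso.symm_apply_le.2 ?_)
    rw [hα₂.orderIso_apply (norm_nonneg e)]
    exact hbound e
  have hγx : γ₀ ‖x‖ ≤ γ₀ c := hγ₀.monotoneOn (norm_nonneg x) hc0 hc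
  have := hdecr e x
  rw [OrderIso.trans_apply]
  linarith

theorem ISS_lyapunov_implies_ISS_general {n : ℕ}
    (g : EuclideanSpace ℝ (Fin n) → EuclideanSpace ℝ (Fin n) → EuclideanSpace ℝ (Fin n))
    (V : EuclideanSpace ℝ (Fin n) → ℝ) (hVnonneg : ∀ e, 0 ≤ V e)
    (α₁ α₂ α₃ γ₀ : ℝ → ℝ)
    (hα₁ : IsClassKInf α₁) (hα₂ : IsClassKInf α₂) (hα₃ : IsClassKInf α₃)
    (hγ₀ : IsClassK γ₀)
    (hbound : ∀ e : EuclideanSpace ℝ (Fin n), α₁ ‖e‖ ≤ V e ∧ V e ≤ α₂ ‖e‖)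
    (hdecr : ∀ e x : EuclideanSpace ℝ (Fin n), V (g e x) - V e ≤ -α₃ ‖e‖ + γ₀ ‖x‖) :
    ∃ β : ℝ → ℝ → ℝ, ∃ γ : ℝ → ℝ, IsClassKL β ∧ IsClassK γ ∧
      ∀ (η : EuclideanSpace ℝ (Fin n)) (x e : ℕ → EuclideanSpace ℝ (Fin n)),
        e 0 = η → (∀ t, e (t + 1) = g (e t) (x t)) → (∃ M : ℝ, ∀ s, ‖x s‖ ≤ M) →
        ∀ t : ℕ, ‖e t‖ ≤ β ‖η‖ t + γ (⨆ s : Fin t, ‖x s‖) := by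
  set E₁ := hα₁.orderIso
  set E₂ := hα₂.orderIso
  -- `ρ = α₃ ∘ α₂⁻¹` bounds the decrease of `V` in terms of `V` itself
  set ρ := E₂.symm.trans hα₃.orderIso
  have hE₁ : E₁.symm 0 = 0 := OrderIso.symm_apply_zero hα₁.orderIso_zero
  have hρ0 : ρ 0 = 0 := by
    rw [OrderIso.trans_apply, OrderIso.symm_apply_zero hα₂.orderIso_zero, hα₃.orderIso_zero]
  have hβ := isClassKL_decayMap_iterate hρ0 hE₁ hα₂.orderIso_zero
  have hγ : IsClassK fun u => E₁.symm (ρ.symm (2 * γ₀ u) + γ₀ u) :=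
    (((hγ₀.comp (continuous_const_mul 2) (strictMono_mul_left_of_pos two_pos) (mul_zero 2)).comp
      ρ.symm.continuous ρ.symm.strictMono (OrderIso.symm_apply_zero hρ0)).add hγ₀).comp
      E₁.symm.continuous E₁.symm.strictMono hE₁
  refine ⟨_, _, hβ, hγ, fun η x e he0 hrec _ t => ?_⟩
  set u : ℕ → ℝ := fun k => ⨆ s : Fin k, ‖x s‖
  have hu0 : ∀ k, 0 ≤ u k := fun k => Real.iSup_nonneg fun s => norm_nonneg (x s)
  have hu : Monotone u := monotone_iSup_fin fun _ => norm_nonneg _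
  have hstep : ∀ k, V (e (k + 1)) ≤ V (e k) - ρ (V (e k)) + γ₀ (u (k + 1)) := fun k =>
    hrec k ▸ lyapunov_step_le hα₂ hα₃ hγ₀ (fun e => (hbound e).2) hdecr (hu0 _)
      (le_iSup_fin_succ (fun s => ‖x s‖) k)
  have hV := le_max_decayMap_iterate hρ0 (fun k => hVnonneg (e k))
    (fun k l hkl => hγ₀.monotoneOn (hu0 k) (hu0 l) (hu hkl)) (fun k => hγ₀.2.2.2 _ (hu0 k)) hstep t
  have hη : V (e 0) ≤ E₂ ‖η‖ := by
    rw [he0, hα₂.orderIso_apply (norm_nonneg _)]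
    exact (hbound η).2
  calc ‖e t‖ = E₁.symm (α₁ ‖e t‖) := by
        rw [← hα₁.orderIso_apply (norm_nonneg _), OrderIso.symm_apply_apply]
    _ ≤ E₁.symm (max ((decayMap ρ)^[t] (E₂ ‖η‖)) (ρ.symm (2 * γ₀ (u t)) + γ₀ (u t))) :=
        E₁.symm.monotone (((hbound _).1.trans hV).trans
          (max_le_max ((strictMono_decayMap ρ.monotone hρ0).monotone.iterate t hη) le_rfl))
    _ ≤ _ := by
        have hβ0 := (hβ.2.1 t t.cast_nonneg).2.2.2 _ (norm_nonneg η)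
        simp only [linearInterp_natCast] at hβ0 ⊢
        rw [E₁.symm.monotone.map_max]
        exact max_le_add_of_nonneg hβ0 (hγ.2.2.2 _ (hu0 t))

/-- If the system `e⁺ = g e x` on ℝⁿ (with `g` continuous, `g 0 0 = 0`)
admits a continuous ISS-Lyapunov function `V` with class-K∞ bounds `α₁, α₂, α₃` and class-K
gain `γ₀`, then it is input-to-state stable: there are a class-KL `β` and class-K `γ` such
that every solution with bounded input satisfies
`‖e t‖ ≤ β ‖η‖ t + γ (sup_{0 ≤ s < t} ‖x s‖)`. -/
theorem ISS_lyapunov_implies_ISS {n : ℕ}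
    (g : EuclideanSpace ℝ (Fin n) → EuclideanSpace ℝ (Fin n) → EuclideanSpace ℝ (Fin n))
    (hg : Continuous fun p : EuclideanSpace ℝ (Fin n) × EuclideanSpace ℝ (Fin n) =>
      g p.1 p.2)
    (hg0 : g 0 0 = 0)
    (V : EuclideanSpace ℝ (Fin n) → ℝ) (hV : Continuous V) (hVnonneg : ∀ e, 0 ≤ V e)
    (α₁ α₂ α₃ γ₀ : ℝ → ℝ)
    (hα₁ : IsClassKInf α₁) (hα₂ : IsClassKInf α₂) (hα₃ : IsClassKInf α₃)
    (hγ₀ : IsClassK γ₀)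
    (hbound : ∀ e : EuclideanSpace ℝ (Fin n), α₁ ‖e‖ ≤ V e ∧ V e ≤ α₂ ‖e‖)
    (hdecr : ∀ e x : EuclideanSpace ℝ (Fin n), V (g e x) - V e ≤ -α₃ ‖e‖ + γ₀ ‖x‖) :
    ∃ β : ℝ → ℝ → ℝ, ∃ γ : ℝ → ℝ, IsClassKL β ∧ IsClassK γ ∧
      ∀ (η : EuclideanSpace ℝ (Fin n)) (x e : ℕ → EuclideanSpace ℝ (Fin n)),
        e 0 = η → (∀ t, e (t + 1) = g (e t) (x t)) → (∃ M : ℝ, ∀ s, ‖x s‖ ≤ M) →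
        ∀ t : ℕ, ‖e t‖ ≤ β ‖η‖ t + γ (⨆ s : Fin t, ‖x s‖) :=
  ISS_lyapunov_implies_ISS_general g V hVnonneg α₁ α₂ α₃ γ₀ hα₁ hα₂ hα₃ hγ₀ hbound hdecr
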